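/- (Chain rule for convex functions along trajectories) Let φ: H → ℝ∪{+∞} be proper convex lower semicontinuous, and let x ∈ H¹(0,T;H) (absolutely continuous with ẋ ∈ L²(0,T;H)) and v ∈ L²(0,T;H) continuous with v(t) ∈ ∂φ(x(t)) for almost every t ∈ [0,T]. Then t ↦ φ(x(t)) is absolutely continuous on [0,T] and d/dt φ(x(t)) = ⟨v(t), ẋ(t)⟩ for almost every t. -/

import Mathlib

/-!
The subdifferential inequalities at two times `s, t` squeeze `φ (x t) - φ (x s)` between
`⟪v s, x t - x s⟫` and `⟪v t, x t - x s⟫`. Since `v` is bounded, `φ ∘ x` is then absolutely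
continuous because `x` is; at a point where `x` is differentiable and `v` is continuous the same
squeeze gives the derivative `⟪v t, x' t⟫`, and the fundamental theorem of calculus for absolutely
continuous functions gives the integral formula. The inclusion `v t ∈ ∂φ (x t)`, assumed only for
a.e. `t`, holds on all of `[0, T]` because the graph of `∂φ` is closed (`φ` is lsc) and `x`, `v`
are continuous.
-/
open MeasureTheory Set Filter
open scoped Topology

variable {H : Type*} [NormedAddCommGroup H] [InnerProductSpace ℝ H] [CompleteSpace H]

/-- `v` belongs to the convex subdifferential of `φ` at `x`. -/
def IsSubdiff (φ : H → EReal) (x v : H) : Prop :=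
  ∀ y : H, φ x + ((inner ℝ v (y - x) : ℝ) : EReal) ≤ φ y

/-- `φ` is proper, convex and lower semicontinuous. -/
def ProperConvexLSC (φ : H → EReal) : Prop :=
  (∀ z, φ z ≠ ⊥) ∧ (∃ z, φ z ≠ ⊤) ∧ LowerSemicontinuous φ ∧
  (∀ z w : H, ∀ a b : ℝ, 0 ≤ a → 0 ≤ b → a + b = 1 →
      φ (a • z + b • w) ≤ (a : EReal) * φ z + (b : EReal) * φ w)

/-- Standing assumptions: `φ` proper convex lsc, `ψ` convex with gradient `ψ'`,
and `φ + ψ` bounded below on `H`. -/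
def Standing (φ : H → EReal) (ψ : H → ℝ) (ψ' : H → H) : Prop :=
  ProperConvexLSC φ ∧
  ConvexOn ℝ Set.univ ψ ∧ (∀ z, HasGradientAt ψ (ψ' z) z) ∧
  (∃ m : ℝ, ∀ z, (m : EReal) ≤ φ z + (ψ z : EReal))

/-- The energy gap `(φ+ψ)(x₀) - inf_H (φ+ψ)` as a real number. -/
noncomputable def Egap (φ : H → EReal) (ψ : H → ℝ) (x₀ : H) : ℝ :=
  ((φ x₀ + (ψ x₀ : EReal)) - sInf (Set.range fun z => φ z + (ψ z : EReal))).toReal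

/-- `(x, v)` is a strong (absolutely continuous) solution on `[0, T]` of
`v ∈ ∂φ(x)`, `λ ẋ + v̇ + v + ∇ψ(x) = 0` a.e., with a.e. derivatives `x'`, `v'`. -/
structure StrongSol (φ : H → EReal) (ψ' : H → H) (lam : ℝ → ℝ) (T : ℝ)
    (x v x' v' : ℝ → H) : Prop where
  subdiff : ∀ t ∈ Set.Icc (0:ℝ) T, IsSubdiff φ (x t) (v t)
  xint : IntegrableOn x' (Set.Icc 0 T)
  vint : IntegrableOn v' (Set.Icc 0 T)
  xrep : ∀ t ∈ Set.Icc (0:ℝ) T, x t = x 0 + ∫ s in (0:ℝ)..t, x' s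
  vrep : ∀ t ∈ Set.Icc (0:ℝ) T, v t = v 0 + ∫ s in (0:ℝ)..t, v' s
  xderiv : ∀ᵐ t ∂(volume.restrict (Set.Ioo 0 T)), HasDerivAt x (x' t) t
  vderiv : ∀ᵐ t ∂(volume.restrict (Set.Ioo 0 T)), HasDerivAt v (v' t) t
  eqn : ∀ᵐ t ∂(volume.restrict (Set.Ioo 0 T)),
      lam t • x' t + v' t + v t + ψ' (x t) = 0

open scoped RealInnerProductSpace

theorem Icc_subset_of_isClosed_of_ae_mem {s : Set ℝ} (hs : IsClosed s) {a b : ℝ} (hab : a < b)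
    (h : ∀ᵐ t ∂volume.restrict (Ioo a b), t ∈ s) : Icc a b ⊆ s := by
  have hnull : volume (Ioo a b ∩ sᶜ) = 0 := by
    rw [ae_restrict_iff' measurableSet_Ioo, ae_iff] at h
    convert h using 2
    ext t
    simp [and_assoc]
  have hIoo : Ioo a b ⊆ s := by
    rw [(isOpen_Ioo.inter hs.isOpen_compl).measure_eq_zero_iff volume] at hnull
    simpa [← sdiff_eq, sdiff_eq_empty] using hnull
  rw [← closure_Ioo hab.ne]
  exact closure_minimal hIoo hs

theorem AbsolutelyContinuousOnInterval.of_dist_le_mul {X Y : Type*} [PseudoMetricSpace X]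
    [PseudoMetricSpace Y] {f : ℝ → X} {g : ℝ → Y} {a b K : ℝ}
    (hg : AbsolutelyContinuousOnInterval g a b)
    (hfg : ∀ s ∈ uIcc a b, ∀ t ∈ uIcc a b, dist (f s) (f t) ≤ K * dist (g s) (g t)) :
    AbsolutelyContinuousOnInterval f a b := by
  unfold AbsolutelyContinuousOnInterval at hg ⊢
  have hKg := hg.const_mul K
  rw [mul_zero] at hKg
  refine squeeze_zero' (Eventually.of_forall fun _ => Finset.sum_nonneg fun _ _ => dist_nonneg)
    ?_ hKg
  refine eventually_inf_principal.2 (Eventually.of_forall fun E hE => ?_)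
  rw [Finset.mul_sum]
  exact Finset.sum_le_sum fun i hi => hfg _ (hE.1 i hi).1 _ (hE.1 i hi).2

theorem absolutelyContinuousOnInterval_of_eq_add_integral {E : Type*} [NormedAddCommGroup E]
    [NormedSpace ℝ E] {x x' : ℝ → E} {a b : ℝ} (hx' : IntervalIntegrable x' volume a b)
    (hx : ∀ t ∈ uIcc a b, x t = x a + ∫ s in a..t, x' s) :
    AbsolutelyContinuousOnInterval x a b := by
  refine (hx'.norm.absolutelyContinuousOnInterval_intervalIntegral left_mem_uIcc).of_dist_le_mul
    (K := 1) fun s hs t ht => ?_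
  have hint : ∀ r ∈ uIcc a b, IntervalIntegrable x' volume a r := fun r hr =>
    hx'.mono_set (uIcc_subset_uIcc left_mem_uIcc hr)
  rw [one_mul, dist_eq_norm, dist_eq_norm, hx s hs, hx t ht, add_sub_add_left_eq_sub,
    intervalIntegral.integral_interval_sub_left (hint s hs) (hint t ht),
    intervalIntegral.integral_interval_sub_left (hint s hs).norm (hint t ht).norm, Real.norm_eq_abs]
  exact intervalIntegral.norm_integral_le_abs_integral_norm

theorem AbsolutelyContinuousOnInterval.integrableOn_and_eq_add_integral {f f' : ℝ → ℝ} {a b : ℝ}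
    (hab : a ≤ b) (hf : AbsolutelyContinuousOnInterval f a b)
    (hf' : ∀ᵐ t ∂volume.restrict (Ioo a b), HasDerivAt f (f' t) t) :
    IntegrableOn f' (Icc a b) ∧ ∀ t ∈ Icc a b, f t = f a + ∫ s in a..t, f' s := by
  have hderiv : deriv f =ᵐ[volume.restrict (Icc a b)] f' := by
    rw [← Measure.restrict_congr_set Ioo_ae_eq_Icc]
    filter_upwards [hf'] with t ht using ht.deriv
  refine ⟨((intervalIntegrable_iff_integrableOn_Icc_of_le hab).1
    hf.intervalIntegrable_deriv).congr_fun_ae hderiv, fun t ht => ?_⟩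
  have hsub : uIcc a t ⊆ uIcc a b := uIcc_subset_uIcc left_mem_uIcc (uIcc_of_le hab ▸ ht)
  rw [← intervalIntegral.integral_congr_ae ?_, (hf.mono hsub).integral_deriv_eq_sub]
  · ring
  · filter_upwards [(ae_restrict_iff' measurableSet_Icc).1 hderiv] with r hr hrt
    exact hr (uIcc_of_le hab ▸ hsub (uIoc_subset_uIcc hrt))

section Subdifferential

variable {E : Type*} [NormedAddCommGroup E] [InnerProductSpace ℝ E] {φ : E → EReal}

theorem ProperConvexLSC.ne_top_of_isSubdiff (hφ : ProperConvexLSC φ) {a u : E}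
    (hu : IsSubdiff φ a u) : φ a ≠ ⊤ := by
  obtain ⟨z, hz⟩ := hφ.2.1
  intro ha
  have := hu z
  rw [ha, EReal.top_add_coe, top_le_iff] at this
  exact hz this

theorem ProperConvexLSC.inner_le_toReal_sub (hφ : ProperConvexLSC φ) {a b u : E}
    (hu : IsSubdiff φ a u) (hb : φ b ≠ ⊤) : ⟪u, b - a⟫ ≤ (φ b).toReal - (φ a).toReal := by
  have h := hu b
  rw [← EReal.coe_toReal (hφ.ne_top_of_isSubdiff hu) (hφ.1 a), ← EReal.coe_toReal hb (hφ.1 b),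
    ← EReal.coe_add, EReal.coe_le_coe_iff] at h
  linarith

theorem ProperConvexLSC.toReal_sub_le_inner (hφ : ProperConvexLSC φ) {a b u w : E}
    (hu : IsSubdiff φ a u) (hw : IsSubdiff φ b w) :
    ⟪u, b - a⟫ ≤ (φ b).toReal - (φ a).toReal ∧ (φ b).toReal - (φ a).toReal ≤ ⟪w, b - a⟫ := by
  refine ⟨hφ.inner_le_toReal_sub hu (hφ.ne_top_of_isSubdiff hw), ?_⟩
  have h := hφ.inner_le_toReal_sub hw (hφ.ne_top_of_isSubdiff hu)
  rw [← neg_sub b a, inner_neg_right] at h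
  linarith

theorem ProperConvexLSC.abs_toReal_sub_sub_inner_le (hφ : ProperConvexLSC φ) {a b u w : E}
    (hu : IsSubdiff φ a u) (hw : IsSubdiff φ b w) :
    |(φ b).toReal - (φ a).toReal - ⟪u, b - a⟫| ≤ ‖w - u‖ * ‖b - a‖ := by
  obtain ⟨hlo, hup⟩ := hφ.toReal_sub_le_inner hu hw
  have h := real_inner_le_norm (w - u) (b - a)
  rw [inner_sub_left] at h
  rw [abs_le]
  constructor <;> linarith [mul_nonneg (norm_nonneg (w - u)) (norm_nonneg (b - a))]

theorem ProperConvexLSC.abs_toReal_sub_le (hφ : ProperConvexLSC φ) {a b u w : E} {M : ℝ}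
    (hu : IsSubdiff φ a u) (hw : IsSubdiff φ b w) (huM : ‖u‖ ≤ M) (hwM : ‖w‖ ≤ M) :
    |(φ b).toReal - (φ a).toReal| ≤ M * ‖b - a‖ := by
  obtain ⟨hlo, hup⟩ := hφ.toReal_sub_le_inner hu hw
  have hu' := abs_le.1 ((abs_real_inner_le_norm u (b - a)).trans
    (mul_le_mul_of_nonneg_right huM (norm_nonneg _)))
  have hw' := abs_le.1 ((abs_real_inner_le_norm w (b - a)).trans
    (mul_le_mul_of_nonneg_right hwM (norm_nonneg _)))
  rw [abs_le]
  constructor <;> linarith [hu'.1, hw'.2]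

theorem LowerSemicontinuous.isClosed_setOf_isSubdiff (hφ : LowerSemicontinuous φ) :
    IsClosed {p : E × E | IsSubdiff φ p.1 p.2} := by
  simp only [IsSubdiff, ofPred_forall]
  refine isClosed_iInter fun y => LowerSemicontinuous.isClosed_preimage ?_ (φ y)
  have hφ₁ : LowerSemicontinuous fun p : E × E => φ p.1 := fun p c hc =>
    continuous_fst.continuousAt.eventually (hφ p.1 c hc)
  have hinner : Continuous fun p : E × E => ((⟪p.2, y - p.1⟫ : ℝ) : EReal) :=
    continuous_coe_real_ereal.comp (continuous_snd.inner (continuous_const.sub continuous_fst))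
  exact hφ₁.add' hinner.lowerSemicontinuous fun p =>
    EReal.continuousAt_add (Or.inr (EReal.coe_ne_bot _)) (Or.inr (EReal.coe_ne_top _))

theorem LowerSemicontinuous.isSubdiff_of_ae_Ioo (hφ : LowerSemicontinuous φ) {x v : ℝ → E}
    {a b : ℝ} (hab : a < b) (hx : ContinuousOn x (Icc a b)) (hv : ContinuousOn v (Icc a b))
    (hsub : ∀ᵐ t ∂volume.restrict (Ioo a b), IsSubdiff φ (x t) (v t)) :
    ∀ t ∈ Icc a b, IsSubdiff φ (x t) (v t) := by
  have hclosed : IsClosed (Icc a b ∩ (fun t => (x t, v t)) ⁻¹' {p | IsSubdiff φ p.1 p.2}) :=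
    (hx.prodMk hv).preimage_isClosed_of_isClosed isClosed_Icc hφ.isClosed_setOf_isSubdiff
  have hsub' : ∀ᵐ t ∂volume.restrict (Ioo a b),
      t ∈ Icc a b ∩ (fun t => (x t, v t)) ⁻¹' {p | IsSubdiff φ p.1 p.2} := by
    filter_upwards [hsub, ae_restrict_mem measurableSet_Ioo] with t ht htab
    exact ⟨Ioo_subset_Icc_self htab, ht⟩
  exact fun t ht => (Icc_subset_of_isClosed_of_ae_mem hclosed hab hsub' ht).2

open Asymptotics in
theorem ProperConvexLSC.hasDerivAt_toReal_comp (hφ : ProperConvexLSC φ) {x v : ℝ → E} {x' : E}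
    {t : ℝ} (hx : HasDerivAt x x' t) (hv : ContinuousAt v t)
    (hsub : ∀ᶠ s in 𝓝 t, IsSubdiff φ (x s) (v s)) :
    HasDerivAt (fun s => (φ (x s)).toReal) ⟪v t, x'⟫ t := by
  have hrem : HasDerivAt (fun s => (φ (x s)).toReal - ⟪v t, x s⟫) 0 t := by
    rw [hasDerivAt_iff_isLittleO]
    simp only [smul_zero, sub_zero]
    have hv₀ : (fun s => ‖v s - v t‖) =o[𝓝 t] fun _ => (1 : ℝ) :=
      (isLittleO_one_iff ℝ).2 (tendsto_iff_norm_sub_tendsto_zero.1 hv)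
    have hprod := hv₀.mul_isBigO hx.isBigO_sub.norm_left
    simp only [one_mul] at hprod
    refine IsBigO.trans_isLittleO (IsBigO.of_bound 1 ?_) hprod
    filter_upwards [hsub] with s hs
    have hbound := hφ.abs_toReal_sub_sub_inner_le hsub.self_of_nhds hs
    rw [inner_sub_right] at hbound
    rw [one_mul, Real.norm_eq_abs, norm_mul, norm_norm, norm_norm]
    convert hbound using 2
    ring
  have hlin : HasDerivAt (fun s => ⟪v t, x s⟫) ⟪v t, x'⟫ t :=
    (innerSL ℝ (v t)).hasFDerivAt.comp_hasDerivAt t hx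
  have h := hrem.add hlin
  rw [zero_add] at h
  exact h.congr_of_eventuallyEq (Eventually.of_forall fun s => (sub_add_cancel _ _).symm)

end Subdifferential

theorem stmt18_general (φ : H → EReal) (hφ : ProperConvexLSC φ)
    (T : ℝ) (hT : 0 < T) (x x' v : ℝ → H)
    (hxrep : ∀ t ∈ Set.Icc (0:ℝ) T, x t = x 0 + ∫ s in (0:ℝ)..t, x' s)
    (hxderiv : ∀ᵐ t ∂(volume.restrict (Set.Ioo 0 T)), HasDerivAt x (x' t) t)
    (hx'L2 : MemLp x' 2 (volume.restrict (Set.Ioo 0 T)))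
    (hvcont : ContinuousOn v (Set.Icc 0 T))
    (hsub : ∀ᵐ t ∂(volume.restrict (Set.Ioo 0 T)), IsSubdiff φ (x t) (v t)) :
    IntegrableOn (fun t => (inner ℝ (v t) (x' t) : ℝ)) (Set.Icc 0 T) ∧
    (∀ t ∈ Set.Icc (0:ℝ) T,
      (φ (x t)).toReal = (φ (x 0)).toReal + ∫ s in (0:ℝ)..t, (inner ℝ (v s) (x' s) : ℝ)) ∧
    ∀ᵐ t ∂(volume.restrict (Set.Ioo 0 T)),
      HasDerivAt (fun s => (φ (x s)).toReal) ((inner ℝ (v t) (x' t) : ℝ)) t := by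
  have hx'int : IntervalIntegrable x' volume 0 T := by
    rw [intervalIntegrable_iff_integrableOn_Ioo_of_le hT.le]
    exact hx'L2.integrable one_le_two
  have hxAC : AbsolutelyContinuousOnInterval x 0 T :=
    absolutelyContinuousOnInterval_of_eq_add_integral hx'int (uIcc_of_le hT.le ▸ hxrep)
  have hsubIcc : ∀ t ∈ Icc 0 T, IsSubdiff φ (x t) (v t) :=
    hφ.2.2.1.isSubdiff_of_ae_Ioo hT (uIcc_of_le hT.le ▸ hxAC.continuousOn) hvcont hsub
  obtain ⟨M, hM⟩ := isCompact_Icc.exists_bound_of_continuousOn hvcont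
  have hAC : AbsolutelyContinuousOnInterval (fun s => (φ (x s)).toReal) 0 T := by
    refine hxAC.of_dist_le_mul (K := M) fun s hs t ht => ?_
    rw [uIcc_of_le hT.le] at hs ht
    rw [Real.dist_eq, dist_eq_norm]
    exact hφ.abs_toReal_sub_le (hsubIcc t ht) (hsubIcc s hs) (hM t ht) (hM s hs)
  have hderiv : ∀ᵐ t ∂(volume.restrict (Ioo 0 T)),
      HasDerivAt (fun s => (φ (x s)).toReal) ⟪v t, x' t⟫ t := by
    filter_upwards [hxderiv, ae_restrict_mem measurableSet_Ioo] with t hxt ht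
    have hnhds : Icc 0 T ∈ 𝓝 t := Icc_mem_nhds ht.1 ht.2
    exact hφ.hasDerivAt_toReal_comp hxt (hvcont.continuousAt hnhds)
      (eventually_of_mem hnhds hsubIcc)
  obtain ⟨hint, heq⟩ := hAC.integrableOn_and_eq_add_integral hT.le hderiv
  exact ⟨hint, heq, hderiv⟩

theorem stmt18 (φ : H → EReal) (hφ : ProperConvexLSC φ)
    (T : ℝ) (hT : 0 < T) (x x' v : ℝ → H)
    (hxrep : ∀ t ∈ Set.Icc (0:ℝ) T, x t = x 0 + ∫ s in (0:ℝ)..t, x' s)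
    (hxderiv : ∀ᵐ t ∂(volume.restrict (Set.Ioo 0 T)), HasDerivAt x (x' t) t)
    (hx'L2 : MemLp x' 2 (volume.restrict (Set.Ioo 0 T)))
    (hvcont : ContinuousOn v (Set.Icc 0 T))
    (hvL2 : MemLp v 2 (volume.restrict (Set.Ioo 0 T)))
    (hsub : ∀ᵐ t ∂(volume.restrict (Set.Ioo 0 T)), IsSubdiff φ (x t) (v t)) :
    IntegrableOn (fun t => (inner ℝ (v t) (x' t) : ℝ)) (Set.Icc 0 T) ∧
    (∀ t ∈ Set.Icc (0:ℝ) T,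
      (φ (x t)).toReal = (φ (x 0)).toReal + ∫ s in (0:ℝ)..t, (inner ℝ (v s) (x' s) : ℝ)) ∧
    ∀ᵐ t ∂(volume.restrict (Set.Ioo 0 T)),
      HasDerivAt (fun s => (φ (x s)).toReal) ((inner ℝ (v t) (x' t) : ℝ)) t :=
  stmt18_general φ hφ T hT x x' v hxrep hxderiv hx'L2 hvcont hsub
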